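/- arXiv:1307.3162 — 3 statements merged into one kernel-verified Lean document; each statement's English description precedes it below -/
import Mathlib

section
/- Let q be an odd prime of a number field K, and u, v, w nonzero elements of O_K with u + v + w = 0. Set s = min(v_q(u), v_q(v), v_q(w)). The curve y² = x(x−u)(x+v) has a model with good reduction at q if and only if s is even and v_q(u) = v_q(v) = v_q(w). -/
/-!
The curve has `Δ = 16 (uvw)²` and `c₄ = 16 (w² - uv)`, and a change of variables with scaling
factor `t` divides them by `t¹²` and `t⁴`. So a model with integral coefficients and unit
discriminant forces `v(uvw)² = v(t)¹²` and `v(w² - uv) ≤ v(t)⁴` for the multiplicative valuation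
`v`. If the three values `v(u), v(v), v(w)` were not all equal, the ultrametric inequality would
make the two largest equal to some `α`, and `w² - uv` (symmetric in `u, v, w` since `u + v + w = 0`)
would have valuation `α²`; then `α⁶ ≤ v(t)¹² = α⁴ β²` with `β < α` the smallest value, which is
absurd. Hence `v(u) = v(v) = v(w) = v(t)²`, so the common `q`-adic order is even. Conversely, if it
is `2m`, rescaling by `πᵐ` for a uniformizer `π` produces such a model.
-/

open NumberField IsDedekindDomain WeierstrassCurve WithZero

namespace Valuation

variable {K Γ₀ : Type*} [Field K] [LinearOrderedCommGroupWithZero Γ₀] (v : Valuation K Γ₀)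
  {a b c : K}

theorem map_sixteen_eq_one (h2 : v 2 = 1) : v 16 = 1 := by
  rw [show (16 : K) = 2 ^ 4 by norm_num, map_pow, h2, one_pow]

theorem map_eq_of_add_add_eq_zero (h : a + b + c = 0) (hca : v c < v a) : v b = v a := by
  rw [show b = -(a + c) by linear_combination h, map_neg, map_add_eq_of_lt_left _ hca]

theorem map_sq_sub_mul_of_add_add_eq_zero (h : a + b + c = 0) (hca : v c < v a) :
    v (c ^ 2 - a * b) = v a ^ 2 := by
  have hab : v (a * b) = v a ^ 2 := by rw [map_mul, map_eq_of_add_add_eq_zero v h hca, sq]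
  have hc : v (c ^ 2) < v (a * b) := by
    rw [map_pow, hab]
    exact pow_lt_pow_left₀ hca zero_le two_ne_zero
  rw [v.map_sub_eq_of_lt_right hc, hab]

theorem not_lt_of_map_sq_sub_mul_le {δ : Γ₀} (h : a + b + c = 0)
    (hc₄ : v (c ^ 2 - a * b) ≤ δ ^ 4) (hΔ : (v a * v b * v c) ^ 2 = δ ^ 12) : ¬ v c < v a := by
  intro hca
  have hb := map_eq_of_add_add_eq_zero v h hca
  have hc₄' : v a ^ 2 ≤ δ ^ 4 := map_sq_sub_mul_of_add_add_eq_zero v h hca ▸ hc₄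
  have ha : 0 < v a := zero_le.trans_lt hca
  apply lt_irrefl (δ ^ 12)
  calc
    δ ^ 12 = v a ^ 4 * v c ^ 2 := by rw [← hΔ, hb]; simp only [mul_pow, ← pow_add]
    _ < v a ^ 4 * v a ^ 2 := mul_lt_mul_of_pos_left (pow_lt_pow_left₀ hca zero_le two_ne_zero)
      (pow_pos ha 4)
    _ = (v a ^ 2) ^ 3 := by simp only [← pow_mul, ← pow_add]
    _ ≤ (δ ^ 4) ^ 3 := pow_le_pow_left₀ zero_le hc₄' 3
    _ = δ ^ 12 := by rw [← pow_mul]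

theorem eq_and_eq_and_eq_sq_of_map_sq_sub_mul_le {δ : Γ₀} (h : a + b + c = 0)
    (hc₄ : v (c ^ 2 - a * b) ≤ δ ^ 4) (hΔ : (v a * v b * v c) ^ 2 = δ ^ 12) :
    v a = v b ∧ v b = v c ∧ v a = δ ^ 2 := by
  -- `c² - ab = a² - bc = b² - ca` because `a + b + c = 0`
  have hca := not_lt_of_map_sq_sub_mul_le v h hc₄ hΔ
  have hcb := not_lt_of_map_sq_sub_mul_le v (a := b) (b := a) (c := c) (by linear_combination h)
    (by rwa [mul_comm b]) (by rw [← hΔ]; ac_rfl)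
  have hac := not_lt_of_map_sq_sub_mul_le v (a := c) (b := b) (c := a) (by linear_combination h)
    (by convert hc₄ using 2; linear_combination (a - c) * h) (by rw [← hΔ]; ac_rfl)
  have hbc := not_lt_of_map_sq_sub_mul_le v (a := c) (b := a) (c := b) (by linear_combination h)
    (by convert hc₄ using 2; linear_combination (b - c) * h) (by rw [← hΔ]; ac_rfl)
  have hac' : v a = v c := le_antisymm (not_lt.mp hca) (not_lt.mp hac)
  have hbc' : v b = v c := le_antisymm (not_lt.mp hcb) (not_lt.mp hbc)
  refine ⟨hac'.trans hbc'.symm, hbc', (pow_left_inj₀ zero_le zero_le (n := 6) (by norm_num)).mp ?_⟩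
  rw [← pow_mul, ← hΔ, hbc', hac']
  simp only [mul_pow, ← pow_add]

end Valuation

namespace WeierstrassCurve

variable {K Γ₀ : Type*} [Field K] [LinearOrderedCommGroupWithZero Γ₀] (v : Valuation K Γ₀)

/-- The Frey–Hellegouarch curve `y² = x (x - a) (x + b)`. -/
def freyCurve (a b : K) : WeierstrassCurve K := ⟨0, b - a, 0, -(a * b), 0⟩

theorem freyCurve_c₄ {a b c : K} (h : a + b + c = 0) :
    (freyCurve a b).c₄ = 16 * (c ^ 2 - a * b) := by
  simp only [freyCurve, c₄, b₂, b₄]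
  linear_combination 16 * (a + b - c) * h

theorem freyCurve_Δ {a b c : K} (h : a + b + c = 0) :
    (freyCurve a b).Δ = 16 * (a * b * c) ^ 2 := by
  simp only [freyCurve, Δ, b₂, b₄, b₆, b₈]
  linear_combination 16 * (a * b) ^ 2 * (a + b - c) * h

def IsGoodModel (W : WeierstrassCurve K) : Prop :=
  v W.a₁ ≤ 1 ∧ v W.a₂ ≤ 1 ∧ v W.a₃ ≤ 1 ∧ v W.a₄ ≤ 1 ∧ v W.a₆ ≤ 1 ∧ v W.Δ = 1

variable {v}

theorem IsGoodModel.valuation_c₄_le_one {W : WeierstrassCurve K} (hW : W.IsGoodModel v) :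
    v W.c₄ ≤ 1 := by
  obtain ⟨h₁, h₂, h₃, h₄, -⟩ := hW
  change W.c₄ ∈ v.integer
  have hnat (n : ℕ) : (n : K) ∈ v.integer := natCast_mem _ n
  simp only [c₄, b₂, b₄]
  exact sub_mem (pow_mem (add_mem (pow_mem h₁ 2) (mul_mem (hnat 4) h₂)) 2)
    (mul_mem (hnat 24) (add_mem (mul_mem (hnat 2) h₄) (mul_mem h₁ h₃)))

theorem valuation_c₄_le_of_isGoodModel_smul {W : WeierstrassCurve K} {C : VariableChange K}
    (hW : (C • W).IsGoodModel v) : v W.c₄ ≤ v C.u ^ 4 := by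
  have hc₄ : W.c₄ = C.u ^ 4 * (C • W).c₄ := by
    rw [variableChange_c₄, ← mul_assoc, ← mul_pow, Units.mul_inv, one_pow, one_mul]
  rw [hc₄, map_mul, map_pow]
  exact mul_le_of_le_one_right' hW.valuation_c₄_le_one

theorem valuation_Δ_of_isGoodModel_smul {W : WeierstrassCurve K} {C : VariableChange K}
    (hW : (C • W).IsGoodModel v) : v W.Δ = v C.u ^ 12 := by
  have hΔ : W.Δ = C.u ^ 12 * (C • W).Δ := by
    rw [variableChange_Δ, ← mul_assoc, ← mul_pow, Units.mul_inv, one_pow, one_mul]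
  rw [hΔ, map_mul, map_pow, hW.2.2.2.2.2, mul_one]

theorem isGoodModel_smul_freyCurve (h2 : v 2 = 1) {a b c : K} (h : a + b + c = 0) (t : Kˣ)
    (hab : v a = v b) (hbc : v b = v c) (ht : v a = v t ^ 2) :
    ((⟨t, 0, 0, 0⟩ : VariableChange K) • freyCurve a b).IsGoodModel v := by
  have hb : v b = v t ^ 2 := hab ▸ ht
  have hc : v c = v t ^ 2 := hbc ▸ hb
  have hpos (n : ℕ) : 0 < v t ^ n := pow_pos (v.pos_iff.mpr t.ne_zero) n
  refine ⟨?_, ?_, ?_, ?_, ?_, ?_⟩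
  · simp [variableChange_a₁, freyCurve]
  · simp only [freyCurve, variableChange_a₂, Units.val_inv_eq_inv_val, inv_pow, mul_zero,
      sub_zero, add_zero, ne_eq, OfNat.ofNat_ne_zero, not_false_eq_true, zero_pow, map_mul,
      map_inv₀, map_pow]
    rw [inv_mul_le_one₀ (hpos 2)]
    exact v.map_sub_le hb.le ht.le
  · simp [variableChange_a₃, freyCurve]
  · simp only [freyCurve, variableChange_a₄, Units.val_inv_eq_inv_val, inv_pow, mul_zero,
      sub_zero, zero_mul, add_zero, ne_eq, OfNat.ofNat_ne_zero, not_false_eq_true, zero_pow,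
      mul_neg, Valuation.map_neg, map_mul, map_inv₀, map_pow]
    rw [ht, hb, ← pow_add, inv_mul_cancel₀ (hpos 4).ne']
  · simp [variableChange_a₆, freyCurve]
  · simp only [variableChange_Δ, freyCurve_Δ h, Units.val_inv_eq_inv_val, inv_pow, map_mul,
      map_inv₀, map_pow, v.map_sixteen_eq_one h2, ht, hb, hc, one_mul, ← pow_mul, ← pow_add]
    exact inv_mul_cancel₀ (hpos 12).ne'

variable (v) in
theorem exists_isGoodModel_smul_freyCurve_iff (h2 : v 2 = 1) {a b c : K} (h : a + b + c = 0) :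
    (∃ C : VariableChange K, (C • freyCurve a b).IsGoodModel v) ↔
      v a = v b ∧ v b = v c ∧ ∃ t : Kˣ, v a = v t ^ 2 := by
  constructor
  · rintro ⟨C, hC⟩
    have hc₄ := valuation_c₄_le_of_isGoodModel_smul hC
    have hΔ := valuation_Δ_of_isGoodModel_smul hC
    rw [freyCurve_c₄ h, map_mul, v.map_sixteen_eq_one h2, one_mul] at hc₄
    rw [freyCurve_Δ h, map_mul, v.map_sixteen_eq_one h2, one_mul, map_pow, map_mul, map_mul] at hΔ
    obtain ⟨hab, hbc, ht⟩ := v.eq_and_eq_and_eq_sq_of_map_sq_sub_mul_le h hc₄ hΔ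
    exact ⟨hab, hbc, C.u, ht⟩
  · rintro ⟨hab, hbc, t, ht⟩
    exact ⟨_, isGoodModel_smul_freyCurve h2 h t hab hbc ht⟩

end WeierstrassCurve

namespace IsDedekindDomain.HeightOneSpectrum

variable {R : Type*} [CommRing R] [IsDedekindDomain R] (K : Type*) [Field K] [Algebra R K]
  [IsFractionRing R K] (q : HeightOneSpectrum R)

theorem valuation_of_mem_pow_of_notMem_pow_succ {r : R} {n : ℕ} (h₁ : r ∈ q.asIdeal ^ n)
    (h₂ : r ∉ q.asIdeal ^ (n + 1)) : q.valuation K (algebraMap R K r) = exp (-(n : ℤ)) := by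
  have hr : r ≠ 0 := by rintro rfl; exact h₂ (zero_mem _)
  rw [valuation_of_algebraMap, ← exp_log (q.intValuation_ne_zero r hr)]
  rw [← intValuation_le_pow_iff_mem, ← exp_log (q.intValuation_ne_zero r hr), exp_le_exp] at h₁ h₂
  push_cast at h₂
  rw [exp_inj]
  omega

end IsDedekindDomain.HeightOneSpectrum

theorem Valuation.exists_units_eq_sq_iff_even {K : Type*} [Field K] {v : Valuation K ℤᵐ⁰}
    (hv : Function.Surjective v) (m : ℤ) : (∃ t : Kˣ, exp m = v t ^ 2) ↔ Even m := by
  constructor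
  · rintro ⟨t, ht⟩
    rw [← exp_log (v.ne_zero_iff.mpr t.ne_zero), ← exp_nsmul, exp_inj] at ht
    exact ⟨_, ht.trans (two_nsmul _)⟩
  · rintro ⟨k, rfl⟩
    obtain ⟨x, hx⟩ := hv (exp k)
    have hx0 : x ≠ 0 := v.ne_zero_iff.mp (hx ▸ exp_ne_zero)
    exact ⟨Units.mk0 x hx0, by rw [Units.val_mk0, hx, sq, exp_add]⟩

theorem good_reduction_iff_valuations_equal_and_even_general
    (K : Type*) [Field K] [NumberField K]
    (q : HeightOneSpectrum (𝓞 K)) (hq : (2 : 𝓞 K) ∉ q.asIdeal)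
    (u v w : 𝓞 K)
    (hsum : u + v + w = 0)
    (nu nv nw : ℕ)
    (hnu : u ∈ q.asIdeal ^ nu ∧ u ∉ q.asIdeal ^ (nu + 1))
    (hnv : v ∈ q.asIdeal ^ nv ∧ v ∉ q.asIdeal ^ (nv + 1))
    (hnw : w ∈ q.asIdeal ^ nw ∧ w ∉ q.asIdeal ^ (nw + 1)) :
    let E : WeierstrassCurve K := ⟨0, (v : K) - (u : K), 0, -((u : K) * (v : K)), 0⟩
    ((∃ C : VariableChange K,
        q.valuation K (C • E).a₁ ≤ 1 ∧
        q.valuation K (C • E).a₂ ≤ 1 ∧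
        q.valuation K (C • E).a₃ ≤ 1 ∧
        q.valuation K (C • E).a₄ ≤ 1 ∧
        q.valuation K (C • E).a₆ ≤ 1 ∧
        q.valuation K (C • E).Δ = 1) ↔
      (Even (min nu (min nv nw)) ∧ nu = nv ∧ nv = nw)) := by
  intro E
  have h2 : q.valuation K 2 = 1 := by
    simpa only [map_ofNat] using (q.valuation_eq_one_iff_notMem (K := K)).mpr hq
  have hsumK : (u : K) + v + w = 0 := by exact_mod_cast congrArg ((↑) : 𝓞 K → K) hsum
  have key := exists_isGoodModel_smul_freyCurve_iff (q.valuation K) h2 hsumK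
  simp only [RingOfIntegers.coe_eq_algebraMap,
    q.valuation_of_mem_pow_of_notMem_pow_succ K hnu.1 hnu.2,
    q.valuation_of_mem_pow_of_notMem_pow_succ K hnv.1 hnv.2,
    q.valuation_of_mem_pow_of_notMem_pow_succ K hnw.1 hnw.2, exp_inj, neg_inj, Nat.cast_inj,
    (q.valuation K).exists_units_eq_sq_iff_even (q.valuation_surjective K), even_neg,
    Int.even_coe_nat] at key
  refine key.trans ⟨?_, ?_⟩
  · rintro ⟨rfl, rfl, h⟩
    simpa using h
  · rintro ⟨h, rfl, rfl⟩
    simpa using h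

theorem good_reduction_iff_valuations_equal_and_even
    (K : Type*) [Field K] [NumberField K]
    (q : HeightOneSpectrum (𝓞 K)) (hq : (2 : 𝓞 K) ∉ q.asIdeal)
    (u v w : 𝓞 K) (hu : u ≠ 0) (hv : v ≠ 0) (hw : w ≠ 0)
    (hsum : u + v + w = 0)
    (nu nv nw : ℕ)
    (hnu : u ∈ q.asIdeal ^ nu ∧ u ∉ q.asIdeal ^ (nu + 1))
    (hnv : v ∈ q.asIdeal ^ nv ∧ v ∉ q.asIdeal ^ (nv + 1))
    (hnw : w ∈ q.asIdeal ^ nw ∧ w ∉ q.asIdeal ^ (nw + 1)) :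
    let E : WeierstrassCurve K := ⟨0, (v : K) - (u : K), 0, -((u : K) * (v : K)), 0⟩
    ((∃ C : VariableChange K,
        q.valuation K (C • E).a₁ ≤ 1 ∧
        q.valuation K (C • E).a₂ ≤ 1 ∧
        q.valuation K (C • E).a₃ ≤ 1 ∧
        q.valuation K (C • E).a₄ ≤ 1 ∧
        q.valuation K (C • E).a₆ ≤ 1 ∧
        q.valuation K (C • E).Δ = 1) ↔
      (Even (min nu (min nv nw)) ∧ nu = nv ∧ nv = nw)) :=
  good_reduction_iff_valuations_equal_and_even_general K q hq u v w hsum nu nv nw hnu hnv hnw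
end

section
/- If d is squarefree, d ≡ 14 (mod 16), and 4^s − 2 = d·w² for some integers s ≥ 2 and w ≠ 0, then every odd prime q dividing d satisfies q ≡ 1 or 7 (mod 8). -/
theorem prime_divisors_d_14_mod_16 (d : ℤ) (hd : Squarefree d) (hdmod : d % 16 = 14)
    (s : ℕ) (hs : 2 ≤ s) (w : ℤ) (hw : w ≠ 0)
    (heq : (4 : ℤ) ^ s - 2 = d * w ^ 2)
    (q : ℤ) (hq : Prime q) (hqodd : q % 2 = 1) (hqd : q ∣ d) :
    q % 8 = 1 ∨ q % 8 = 7 := by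
  set p := q.natAbs with hp_def
  have hp : p.Prime := Int.prime_iff_natAbs_prime.mp hq
  haveI : Fact p.Prime := ⟨hp⟩
  have hp2 : p ≠ 2 := by
    intro h
    have : (q = 2 ∨ q = -2) := by
      rcases Int.natAbs_eq q with h' | h' <;> omega
    omega
  -- q divides 4^s - 2
  have hdvd : (q : ℤ) ∣ (4 : ℤ) ^ s - 2 := heq ▸ hqd.mul_right _
  have hdvd' : (p : ℤ) ∣ (4 : ℤ) ^ s - 2 := Int.natAbs_dvd.mpr hdvd
  have hzero : ((4 : ℤ) ^ s - 2 : ℤ) = 0 → True := fun _ => trivial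
  have hcast : ((4 : ZMod p)) ^ s = 2 := by
    have := (ZMod.intCast_zmod_eq_zero_iff_dvd ((4:ℤ)^s - 2) p).mpr hdvd'
    push_cast at this
    linear_combination this
  have hsq : IsSquare (2 : ZMod p) := by
    refine ⟨(2 : ZMod p) ^ s, ?_⟩
    have h2 : (2 : ZMod p) ^ s * 2 ^ s = (4 : ZMod p) ^ s := by rw [← mul_pow]; norm_num
    rw [h2, hcast]
  have hmod8 := (ZMod.exists_sq_eq_two_iff hp2).mp hsq
  have hpodd : p % 2 = 1 := by
    have := hp.eq_one_or_self_of_dvd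
    rcases Nat.Prime.eq_one_or_self_of_dvd hp 2 with _
    · omega
  have hp8 : p % 8 = 1 ∨ p % 8 = 7 := by omega
  rcases Int.natAbs_eq q with h' | h' <;> omega
end

section
/- The number of distinct prime divisors of the Mersenne number M_m = 2^m − 1 is at least 2^{ω(m)} − 2, where ω(m) is the number of distinct prime divisors of m. -/
/-!
For squarefree `d ∉ {1, 6}` some prime `p` has `orderOf (2 : ZMod p) = d`: a prime factor of
`Φ_d(2)` not dividing `d` does. A prime factor `p` of `Φ_d(2)` that divides `d = e * p` has
order `e < p`, so it is the largest prime factor of `d`, and `p² ∤ Φ_d(2)` by lifting the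
exponent. So if no prime factor of `Φ_d(2)` were primitive, then `Φ_d(2) = p`, and
`Φ_e(2^p) = Φ_{ep}(2) Φ_e(2)` together with `(q - 1)^φ(e) < Φ_e(q) ≤ (q + 1)^φ(e)` forces
`p = 3`, `e = 2`. The `2^ω(m)` squarefree divisors of `m` other than `1` and `6` thereby give
distinct prime factors of `2^m - 1`.
-/

open Polynomial Finset

namespace ZMod

theorem intCast_pow_eq_one_iff {p : ℕ} {a : ℤ} {n : ℕ} :
    (a : ZMod p) ^ n = 1 ↔ (p : ℤ) ∣ a ^ n - 1 := by
  rw [← intCast_eq_intCast_iff_dvd_sub, eq_comm]; push_cast; rfl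

variable {p : ℕ} [Fact p.Prime]

theorem orderOf_eq_of_isRoot_cyclotomic {d : ℕ} {x : ZMod p} (hpd : ¬ p ∣ d)
    (hx : (cyclotomic d (ZMod p)).IsRoot x) : orderOf x = d :=
  have : NeZero (d : ZMod p) := ⟨by rwa [Ne, natCast_eq_zero_iff]⟩
  (isRoot_cyclotomic_iff.mp hx).eq_orderOf.symm

theorem isRoot_cyclotomic_of_isRoot_cyclotomic_mul_prime {e : ℕ} {x : ZMod p} (hpe : ¬ p ∣ e)
    (hx : (cyclotomic (e * p) (ZMod p)).IsRoot x) : (cyclotomic e (ZMod p)).IsRoot x := by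
  rw [cyclotomic_mul_prime_eq_pow_of_not_dvd _ hpe, IsRoot, eval_pow] at hx
  exact pow_eq_zero_iff (Nat.sub_ne_zero_of_lt (Fact.out : p.Prime).one_lt) |>.mp hx

theorem isRoot_cyclotomic_iff_dvd_eval {d : ℕ} {a : ℤ} :
    (cyclotomic d (ZMod p)).IsRoot (a : ZMod p) ↔ (p : ℤ) ∣ eval a (cyclotomic d ℤ) := by
  rw [IsRoot, ← map_cyclotomic_int, eval_intCast_map, eq_intCast, intCast_zmod_eq_zero_iff_dvd,
    Int.cast_id]

theorem orderOf_two_ne_one : orderOf (2 : ZMod p) ≠ 1 := by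
  rw [Ne, orderOf_eq_one_iff, ← one_add_one_eq_two, add_eq_left]
  exact one_ne_zero

theorem orderOf_eq_of_dvd_cyclotomic_eval {d : ℕ} {a : ℤ} (hpd : ¬ p ∣ d)
    (h : (p : ℤ) ∣ eval a (cyclotomic d ℤ)) : orderOf (a : ZMod p) = d :=
  orderOf_eq_of_isRoot_cyclotomic hpd (isRoot_cyclotomic_iff_dvd_eval.mpr h)

theorem orderOf_eq_of_dvd_cyclotomic_eval_mul_prime {e : ℕ} {a : ℤ} (hpe : ¬ p ∣ e)
    (h : (p : ℤ) ∣ eval a (cyclotomic (e * p) ℤ)) : orderOf (a : ZMod p) = e :=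
  orderOf_eq_of_isRoot_cyclotomic hpe
    (isRoot_cyclotomic_of_isRoot_cyclotomic_mul_prime hpe (isRoot_cyclotomic_iff_dvd_eval.mpr h))

end ZMod

theorem not_sq_dvd_cyclotomic_eval_mul_prime {p e : ℕ} {a : ℤ} (hp : p.Prime) (hp_odd : Odd p)
    (ha : a ^ e ≠ 1) (hpa : (p : ℤ) ∣ a ^ e - 1) :
    ¬ (p : ℤ) ^ 2 ∣ eval a (cyclotomic (e * p) ℤ) := by
  intro hsq
  have he : e ≠ 0 := by rintro rfl; exact ha (pow_zero a)
  have hdvd : (a ^ e - 1) * eval a (cyclotomic (e * p) ℤ) ∣ (a ^ e) ^ p - 1 ^ p := by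
    have hmem : e ∈ (e * p).properDivisors :=
      Nat.mem_properDivisors.mpr ⟨dvd_mul_right e p,
        lt_mul_of_one_lt_right (Nat.pos_of_ne_zero he) hp.one_lt⟩
    simpa [← pow_mul] using
      map_dvd (evalRingHom a) (X_pow_sub_one_mul_cyclotomic_dvd_X_pow_sub_one_of_dvd ℤ hmem)
  have hpa' : ¬ (p : ℤ) ∣ a ^ e := fun h =>
    (Nat.prime_iff_prime_int.mp hp).not_dvd_one (by simpa using dvd_sub h hpa)
  have hfin : FiniteMultiplicity (p : ℤ) (a ^ e - 1) :=
    Int.finiteMultiplicity_iff.mpr ⟨by simp [hp.ne_one], sub_ne_zero.mpr ha⟩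
  have hlte := Int.emultiplicity_pow_sub_pow hp hp_odd (y := 1) (by simpa using hpa) hpa' p
  rw [hp.emultiplicity_self, hfin.emultiplicity_eq_multiplicity] at hlte
  have hle : ((multiplicity (p : ℤ) (a ^ e - 1) + 2 : ℕ) : ℕ∞) ≤
      emultiplicity (p : ℤ) ((a ^ e) ^ p - 1 ^ p) :=
    le_emultiplicity_of_pow_dvd (by
      rw [pow_add]
      exact (mul_dvd_mul (pow_multiplicity_dvd _ _) hsq).trans hdvd)
  rw [hlte] at hle
  norm_cast at hle
  omega

theorem three_mul_add_one_le_two_pow {n : ℕ} (hn : 5 ≤ n) : 3 * n + 1 ≤ 2 ^ n := by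
  induction n, hn using Nat.le_induction with
  | base => norm_num
  | succ n _ ih => rw [pow_succ]; omega

theorem lt_cyclotomic_eval_two_mul_prime {p e : ℕ} (hp : p.Prime) (hp5 : 5 ≤ p) (he : 2 ≤ e)
    (hpe : ¬ p ∣ e) : (p : ℝ) < eval 2 (cyclotomic (e * p) ℝ) := by
  set t := e.totient
  have ht : t ≠ 0 := (Nat.totient_pos.mpr (by omega)).ne'
  have hexpand : eval ((2 : ℝ) ^ p) (cyclotomic e ℝ) =
      eval 2 (cyclotomic (e * p) ℝ) * eval 2 (cyclotomic e ℝ) := by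
    rw [← expand_eval, cyclotomic_expand_eq_cyclotomic_mul hp hpe, eval_mul]
  have hlow : ((2 : ℝ) ^ p - 1) ^ t < eval ((2 : ℝ) ^ p) (cyclotomic e ℝ) :=
    sub_one_pow_totient_lt_cyclotomic_eval he (one_lt_pow₀ one_lt_two hp.ne_zero)
  have hup : eval 2 (cyclotomic e ℝ) ≤ 3 ^ t := by
    simpa [show (2 : ℝ) + 1 = 3 by norm_num] using
      cyclotomic_eval_le_add_one_pow_totient one_lt_two e
  have h3p : 3 * (p : ℝ) ≤ 2 ^ p - 1 := by
    have := three_mul_add_one_le_two_pow hp5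
    rw [le_sub_iff_add_le]
    exact_mod_cast this
  have hpos : 0 < eval 2 (cyclotomic (e * p) ℝ) := cyclotomic_pos' _ one_lt_two
  have : (p : ℝ) ^ t * 3 ^ t < eval 2 (cyclotomic (e * p) ℝ) * 3 ^ t :=
    calc (p : ℝ) ^ t * 3 ^ t = (3 * p) ^ t := by ring
      _ ≤ (2 ^ p - 1) ^ t := pow_le_pow_left₀ (by positivity) h3p t
      _ < eval 2 (cyclotomic (e * p) ℝ) * eval 2 (cyclotomic e ℝ) := hexpand ▸ hlow
      _ ≤ eval 2 (cyclotomic (e * p) ℝ) * 3 ^ t := mul_le_mul_of_nonneg_left hup hpos.le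
  calc (p : ℝ) ≤ p ^ t := le_self_pow₀ (by exact_mod_cast hp.one_le) ht
    _ < eval 2 (cyclotomic (e * p) ℝ) := lt_of_mul_lt_mul_right this (by positivity)

section BaseTwo

variable {p e : ℕ} [Fact p.Prime]

theorem orderOf_two_eq_of_dvd_cyclotomic_eval_mul_prime (hpe : ¬ p ∣ e)
    (h : (p : ℤ) ∣ eval 2 (cyclotomic (e * p) ℤ)) : orderOf (2 : ZMod p) = e := by
  simpa using ZMod.orderOf_eq_of_dvd_cyclotomic_eval_mul_prime (a := 2) hpe h

theorem two_le_and_lt_of_dvd_cyclotomic_eval_mul_prime (hpe : ¬ p ∣ e) (he : e ≠ 0)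
    (h : (p : ℤ) ∣ eval 2 (cyclotomic (e * p) ℤ)) : 2 ≤ e ∧ e < p := by
  have hord := orderOf_two_eq_of_dvd_cyclotomic_eval_mul_prime hpe h
  have h1 : e ≠ 1 := hord ▸ ZMod.orderOf_two_ne_one
  exact ⟨by omega, hord ▸ ZMod.orderOf_lt (Fact.out : p.Prime).one_lt _⟩

end BaseTwo

theorem Nat.Prime.not_dvd_of_squarefree_mul {p e : ℕ} (hp : p.Prime) (h : Squarefree (p * e)) :
    ¬ p ∣ e :=
  hp.coprime_iff_not_dvd.mp (Nat.squarefree_mul_iff.mp h).1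

theorem lt_of_dvd_cyclotomic_eval_two {p q d : ℕ} (hp : p.Prime) (hq : q.Prime)
    (hd : Squarefree d) (hpd : p ∣ d) (hqd : q ∣ d) (hqp : q ≠ p)
    (h : (p : ℤ) ∣ eval 2 (cyclotomic d ℤ)) : q < p := by
  have := Fact.mk hp
  obtain ⟨e, rfl⟩ := hpd
  have he : e ≠ 0 := right_ne_zero_of_mul hd.ne_zero
  have hqe : q ∣ e := (hq.dvd_mul.mp hqd).resolve_left fun hqp' =>
    hqp ((Nat.prime_dvd_prime_iff_eq hq hp).mp hqp')
  rw [mul_comm] at h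
  exact (Nat.le_of_dvd (Nat.pos_of_ne_zero he) hqe).trans_lt
    (two_le_and_lt_of_dvd_cyclotomic_eval_mul_prime (hp.not_dvd_of_squarefree_mul hd) he h).2

theorem not_sq_dvd_cyclotomic_eval_two {p d : ℕ} (hp : p.Prime) (hd : Squarefree d)
    (hpd : p ∣ d) (h : (p : ℤ) ∣ eval 2 (cyclotomic d ℤ)) :
    ¬ (p : ℤ) ^ 2 ∣ eval 2 (cyclotomic d ℤ) := by
  have := Fact.mk hp
  obtain ⟨e, rfl⟩ := hpd
  have hpe := hp.not_dvd_of_squarefree_mul hd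
  have he : e ≠ 0 := right_ne_zero_of_mul hd.ne_zero
  rw [mul_comm] at h ⊢
  have hord := orderOf_two_eq_of_dvd_cyclotomic_eval_mul_prime hpe h
  have hodd : Odd p :=
    hp.odd_of_ne_two (by have := two_le_and_lt_of_dvd_cyclotomic_eval_mul_prime hpe he h; omega)
  have hpow : (p : ℤ) ∣ 2 ^ e - 1 :=
    ZMod.intCast_pow_eq_one_iff.mp (by simpa [hord] using pow_orderOf_eq_one (2 : ZMod p))
  exact not_sq_dvd_cyclotomic_eval_mul_prime hp hodd (one_lt_pow₀ one_lt_two he).ne' hpow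

theorem one_lt_natAbs_cyclotomic_eval_two {d : ℕ} (hd : 1 < d) :
    1 < (eval 2 (cyclotomic d ℤ)).natAbs := by
  simpa using sub_one_lt_natAbs_cyclotomic_eval (q := 2) hd (by norm_num)

theorem cyclotomic_eval_two_eq_prime {d p : ℕ} (hd : Squarefree d) (hd1 : 1 < d) (hp : p.Prime)
    (hpN : (p : ℤ) ∣ eval 2 (cyclotomic d ℤ))
    (hall : ∀ q : ℕ, q.Prime → (q : ℤ) ∣ eval 2 (cyclotomic d ℤ) → q ∣ d) :
    eval 2 (cyclotomic d ℤ) = p := by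
  have hN := one_lt_natAbs_cyclotomic_eval_two hd1
  have hN0 := (cyclotomic_pos' d (one_lt_two (α := ℤ))).le
  set N := eval 2 (cyclotomic d ℤ)
  have huniq {q : ℕ} (hq : q.Prime) (hqN : q ∣ N.natAbs) : q = p := by
    by_contra hqp
    have hqN' := Int.natCast_dvd.mpr hqN
    exact lt_asymm (lt_of_dvd_cyclotomic_eval_two hp hq hd (hall p hp hpN) (hall q hq hqN') hqp hpN)
      (lt_of_dvd_cyclotomic_eval_two hq hp hd (hall q hq hqN') (hall p hp hpN) (Ne.symm hqp) hqN')
  have hpow := Nat.eq_prime_pow_of_unique_prime_dvd (by omega) huniq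
  set k := N.natAbs.primeFactorsList.length
  have hk : k < 2 := by
    by_contra! hk
    refine not_sq_dvd_cyclotomic_eval_two hp hd (hall p hp hpN) hpN ?_
    exact_mod_cast Int.natCast_dvd.mpr (hpow ▸ Nat.pow_dvd_pow p hk)
  have hk0 : k ≠ 0 := by rintro hk0; rw [hk0, pow_zero] at hpow; omega
  rw [← Int.natAbs_of_nonneg hN0, hpow, show k = 1 by omega, pow_one]

theorem exists_prime_orderOf_two_eq {d : ℕ} (hd : Squarefree d) (h1 : d ≠ 1) (h6 : d ≠ 6) :
    ∃ p : ℕ, p.Prime ∧ orderOf (2 : ZMod p) = d := by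
  by_contra! hno
  have hd1 : 1 < d := by have := hd.ne_zero; omega
  have hall (q : ℕ) (hq : q.Prime) (hqN : (q : ℤ) ∣ eval 2 (cyclotomic d ℤ)) : q ∣ d := by
    have := Fact.mk hq
    by_contra hqd
    exact hno q hq (by simpa using ZMod.orderOf_eq_of_dvd_cyclotomic_eval (a := 2) hqd hqN)
  obtain ⟨p, hp, hpN⟩ : ∃ p : ℕ, p.Prime ∧ (p : ℤ) ∣ eval 2 (cyclotomic d ℤ) :=
    ⟨_, Nat.minFac_prime (one_lt_natAbs_cyclotomic_eval_two hd1).ne',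
      Int.natCast_dvd.mpr (Nat.minFac_dvd _)⟩
  have hNp := cyclotomic_eval_two_eq_prime hd hd1 hp hpN hall
  have := Fact.mk hp
  obtain ⟨e, rfl⟩ := hall p hp hpN
  have hpe := hp.not_dvd_of_squarefree_mul hd
  have he : e ≠ 0 := right_ne_zero_of_mul hd.ne_zero
  rw [mul_comm] at hpN hNp h6
  obtain ⟨he2, hep⟩ := two_le_and_lt_of_dvd_cyclotomic_eval_mul_prime hpe he hpN
  rcases (show p = 3 ∨ p = 4 ∨ 5 ≤ p by omega) with hp3 | hp4 | hp5
  · exact h6 (by rw [hp3] at hep ⊢; omega)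
  · exact absurd hp (by rw [hp4]; decide)
  · have hlt := lt_cyclotomic_eval_two_mul_prime hp hp5 he2 hpe
    have hcast : eval 2 (cyclotomic (e * p) ℝ) = p := by
      simpa [hNp] using eval_intCast_map (Int.castRingHom ℝ) (cyclotomic (e * p) ℤ) 2
    exact hlt.ne' hcast

theorem dvd_two_pow_sub_one_of_orderOf_dvd {p m : ℕ} (h : orderOf (2 : ZMod p) ∣ m) :
    p ∣ 2 ^ m - 1 := by
  have := ZMod.intCast_pow_eq_one_iff (a := 2) |>.mp
    (by exact_mod_cast orderOf_dvd_iff_pow_eq_one.mp h)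
  exact Int.natCast_dvd_natCast.mp (by push_cast [Nat.one_le_two_pow]; exact this)

theorem Nat.card_divisors_filter_squarefree {n : ℕ} (hn : n ≠ 0) :
    #{d ∈ n.divisors | Squarefree d} = 2 ^ #n.primeFactors := by
  rw [card_def, Nat.divisors_filter_squarefree hn, Multiset.card_map, ← card_def, card_powerset,
    Nat.factors_eq]
  simp

theorem omega_mersenne_lower_bound (m : ℕ) (hm : 0 < m) :
    2 ^ m.primeFactors.card - 2 ≤ (2 ^ m - 1).primeFactors.card := by
  set D := {d ∈ m.divisors | Squarefree d} \ {1, 6}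
  have hprim (d : ℕ) (hd : d ∈ D) : ∃ p : ℕ, p.Prime ∧ orderOf (2 : ZMod p) = d := by
    simp only [D, mem_sdiff, mem_filter, mem_insert, mem_singleton, not_or] at hd
    exact exists_prime_orderOf_two_eq hd.1.2 hd.2.1 hd.2.2
  choose! f hf_prime hf_order using hprim
  have hmaps : Set.MapsTo f D (2 ^ m - 1).primeFactors := fun d hd => by
    have hdm : d ∣ m := Nat.dvd_of_mem_divisors (mem_filter.mp (mem_sdiff.mp hd).1).1
    refine Nat.mem_primeFactors.mpr ⟨hf_prime d hd, ?_, ?_⟩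
    · exact dvd_two_pow_sub_one_of_orderOf_dvd ((hf_order d hd).symm ▸ hdm)
    · exact Nat.sub_ne_zero_of_lt (Nat.one_lt_two_pow hm.ne')
  calc 2 ^ #m.primeFactors - 2 = #{d ∈ m.divisors | Squarefree d} - #{1, 6} := by
        rw [Nat.card_divisors_filter_squarefree hm.ne']; rfl
    _ ≤ #D := le_card_sdiff _ _
    _ ≤ _ := card_le_card_of_injOn f hmaps fun a ha b hb hab => by
        rw [← hf_order a ha, ← hf_order b hb, hab]
end
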